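/- Suppose φ : 𝔹_d → B(U,Y) and ψ : 𝔹_d → B(V,W) satisfy: there exist a Hilbert space M and unitaries α̂ : U ⊕ M → V, β : Y → W with β φ_M(z) = ψ(z) α̂ for all z (where φ_M(z)(u ⊕ m) = φ(z)u), and dim U⁰_φ = dim V⁰_ψ. Then φ coincides with ψ, i.e. there exist unitaries α : U → V, β : Y → W with β φ(z) = ψ(z) α for all z ∈ 𝔹_d. -/

import Mathlib

/-!
Let `K` and `L` be the common kernels of `φ` and `ψ` on the ball. The intertwining relation shows
that `α̂` maps `K ⊕ M` onto `L`; being unitary, it then maps the orthogonal complement `Kᗮ ⊕ 0`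
onto `Lᗮ`. Gluing this restriction with a unitary `K ≃ L` gives `α`, and `β` still intertwines
because `φ` vanishes on `K` and `ψ` on `L`.
-/

open Metric

theorem Submodule.isClosed_biInf_ker {R E F ι : Type*} [Semiring R]
    [AddCommMonoid E] [TopologicalSpace E] [Module R E]
    [AddCommMonoid F] [TopologicalSpace F] [T1Space F] [Module R F]
    (s : Set ι) (f : ι → E →L[R] F) :
    IsClosed ((⨅ i ∈ s, LinearMap.ker (f i : E →ₗ[R] F) : Submodule R E) : Set E) := by
  simp only [Submodule.coe_iInf]
  exact isClosed_biInter fun i _ => (f i).isClosed_ker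

section

variable {𝕜 E F : Type*} [RCLike 𝕜]
  [NormedAddCommGroup E] [InnerProductSpace 𝕜 E]
  [NormedAddCommGroup F] [InnerProductSpace 𝕜 F]

variable (𝕜 E F) in
noncomputable def WithLp.inlₗᵢ : E →ₗᵢ[𝕜] WithLp 2 (E × F) where
  toLinearMap := (WithLp.linearEquiv 2 𝕜 (E × F)).symm.toLinearMap ∘ₗ LinearMap.inl 𝕜 E F
  norm_map' := WithLp.norm_toLp_fst 2 E F

@[simp]
theorem WithLp.inlₗᵢ_apply (x : E) : WithLp.inlₗᵢ 𝕜 E F x = WithLp.toLp 2 (x, 0) := rfl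

theorem WithLp.orthogonal_comap_fstₗ (K : Submodule 𝕜 E) :
    (K.comap (WithLp.fstₗ 2 𝕜 E F))ᗮ = Kᗮ.map (WithLp.inlₗᵢ 𝕜 E F).toLinearMap := by
  apply le_antisymm
  · intro x hx
    have hsnd : x.snd = 0 := by
      simpa using hx (WithLp.toLp 2 (0, x.snd)) (by simp)
    have hfst : x.fst ∈ Kᗮ := fun k hk => by
      simpa using hx (WithLp.toLp 2 (k, 0)) (by simpa using hk)
    exact ⟨x.fst, hfst, WithLp.ofLp_injective 2 (by ext <;> simp [hsnd])⟩
  · rintro _ ⟨u, hu, rfl⟩ y hy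
    simpa using hu _ hy

noncomputable def LinearIsometry.equivOfMapEq (j : E →ₗᵢ[𝕜] F) {P : Submodule 𝕜 E}
    {Q : Submodule 𝕜 F} (h : P.map j.toLinearMap = Q) : P ≃ₗᵢ[𝕜] Q :=
  (j.comp P.subtypeₗᵢ).equivRange.trans
    (LinearIsometryEquiv.ofEq _ _ (by rw [← h]; ext; simp))

@[simp]
theorem LinearIsometry.coe_equivOfMapEq_apply (j : E →ₗᵢ[𝕜] F) {P : Submodule 𝕜 E}
    {Q : Submodule 𝕜 F} (h : P.map j.toLinearMap = Q) (x : P) :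
    (j.equivOfMapEq h x : F) = j x := rfl

noncomputable def LinearIsometryEquiv.orthogonalSum {K : Submodule 𝕜 E} {L : Submodule 𝕜 F}
    [K.HasOrthogonalProjection] [L.HasOrthogonalProjection]
    (τ : K ≃ₗᵢ[𝕜] L) (σ : Kᗮ ≃ₗᵢ[𝕜] Lᗮ) : E ≃ₗᵢ[𝕜] F :=
  K.orthogonalDecomposition.trans ((τ.withLpProdCongr 2 σ).trans L.orthogonalDecomposition.symm)

theorem LinearIsometryEquiv.orthogonalSum_apply {K : Submodule 𝕜 E} {L : Submodule 𝕜 F}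
    [K.HasOrthogonalProjection] [L.HasOrthogonalProjection]
    (τ : K ≃ₗᵢ[𝕜] L) (σ : Kᗮ ≃ₗᵢ[𝕜] Lᗮ) (x : E) :
    orthogonalSum τ σ x =
      (τ (K.orthogonalProjectionOnto x) : F) + σ (Kᗮ.orthogonalProjectionOnto x) := by
  simp [orthogonalSum]

end

theorem coincidence_from_extended_coincidence_general
    {d : ℕ} {U Y V W M : Type*}
    [NormedAddCommGroup U] [InnerProductSpace ℂ U] [CompleteSpace U]
    [NormedAddCommGroup Y] [InnerProductSpace ℂ Y]
    [NormedAddCommGroup V] [InnerProductSpace ℂ V] [CompleteSpace V]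
    [NormedAddCommGroup W] [InnerProductSpace ℂ W]
    [NormedAddCommGroup M] [InnerProductSpace ℂ M]
    (φ : EuclideanSpace ℂ (Fin d) → (U →L[ℂ] Y))
    (ψ : EuclideanSpace ℂ (Fin d) → (V →L[ℂ] W))
    (αhat : WithLp 2 (U × M) ≃ₗᵢ[ℂ] V) (β : Y ≃ₗᵢ[ℂ] W)
    (hco : ∀ z ∈ ball (0 : EuclideanSpace ℂ (Fin d)) 1, ∀ (u : U) (m : M),
        β (φ z u) = ψ z (αhat ((WithLp.equiv 2 (U × M)).symm (u, m))))
    (hdim : Nonempty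
      ((⨅ z ∈ ball (0 : EuclideanSpace ℂ (Fin d)) 1, LinearMap.ker (φ z : U →ₗ[ℂ] Y) :
          Submodule ℂ U) ≃ₗᵢ[ℂ]
       (⨅ z ∈ ball (0 : EuclideanSpace ℂ (Fin d)) 1, LinearMap.ker (ψ z : V →ₗ[ℂ] W) :
          Submodule ℂ V))) :
    ∃ (α : U ≃ₗᵢ[ℂ] V) (β' : Y ≃ₗᵢ[ℂ] W),
      ∀ z ∈ ball (0 : EuclideanSpace ℂ (Fin d)) 1, ∀ u : U,
        β' (φ z u) = ψ z (α u) := by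
  obtain ⟨τ⟩ := hdim
  set B := ball (0 : EuclideanSpace ℂ (Fin d)) 1
  set K : Submodule ℂ U := ⨅ z ∈ B, LinearMap.ker (φ z : U →ₗ[ℂ] Y)
  set L : Submodule ℂ V := ⨅ z ∈ B, LinearMap.ker (ψ z : V →ₗ[ℂ] W)
  have : CompleteSpace K := (Submodule.isClosed_biInf_ker B φ).completeSpace_coe
  have : CompleteSpace L := (Submodule.isClosed_biInf_ker B ψ).completeSpace_coe
  have hK : ∀ u, u ∈ K ↔ ∀ z ∈ B, φ z u = 0 := by simp [K]
  have hL : ∀ v, v ∈ L ↔ ∀ z ∈ B, ψ z v = 0 := by simp [L]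
  have hα_kernels : (K.comap (WithLp.fstₗ 2 ℂ U M)).map (αhat.toLinearEquiv : _ →ₗ[ℂ] V) = L := by
    ext v
    rw [Submodule.mem_map_equiv, ← LinearIsometryEquiv.toLinearEquiv_symm,
      LinearIsometryEquiv.coe_toLinearEquiv, Submodule.mem_comap, hK, hL]
    refine forall₂_congr fun z hz => ?_
    have h : β (φ z (WithLp.fstₗ 2 ℂ U M (αhat.symm v))) = ψ z (αhat (αhat.symm v)) :=
      hco z hz _ (αhat.symm v).snd
    rw [αhat.apply_symm_apply] at h
    rw [← h, β.map_eq_zero_iff]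
  have hα_complements :
      Kᗮ.map (αhat.toLinearIsometry.comp (WithLp.inlₗᵢ ℂ U M)).toLinearMap = Lᗮ := by
    rw [← hα_kernels, ← Submodule.map_orthogonal_equiv, WithLp.orthogonal_comap_fstₗ]
    exact Submodule.map_comp _ _ _
  refine ⟨.orthogonalSum τ (LinearIsometry.equivOfMapEq _ hα_complements), β, fun z hz u => ?_⟩
  have hu : φ z (Kᗮ.orthogonalProjectionOnto u) = φ z u := by
    rw [K.orthogonalProjectionOnto_orthogonal, Submodule.coe_mk, map_sub, sub_eq_self]
    exact (hK _).1 (K.orthogonalProjectionOnto u).2 z hz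
  rw [LinearIsometryEquiv.orthogonalSum_apply, map_add, (hL _).1 (τ _).2 z hz, zero_add,
    LinearIsometry.coe_equivOfMapEq_apply, ← hu]
  exact hco z hz _ 0

/-- suppose there are a Hilbert space M and unitaries α̂ : U ⊕ M → V,
β : Y → W with β φ_M(z) = ψ(z) α̂ on the ball (φ_M(z)(u ⊕ m) = φ(z)u), and suppose
dim U⁰_φ = dim V⁰_ψ (there is a unitary between the common kernels). Then φ coincides
with ψ: there exist unitaries α : U → V, β' : Y → W with β' φ(z) = ψ(z) α on the ball. -/
theorem coincidence_from_extended_coincidence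
    {d : ℕ} {U Y V W M : Type*}
    [NormedAddCommGroup U] [InnerProductSpace ℂ U] [CompleteSpace U]
    [NormedAddCommGroup Y] [InnerProductSpace ℂ Y] [CompleteSpace Y]
    [NormedAddCommGroup V] [InnerProductSpace ℂ V] [CompleteSpace V]
    [NormedAddCommGroup W] [InnerProductSpace ℂ W] [CompleteSpace W]
    [NormedAddCommGroup M] [InnerProductSpace ℂ M] [CompleteSpace M]
    (φ : EuclideanSpace ℂ (Fin d) → (U →L[ℂ] Y))
    (ψ : EuclideanSpace ℂ (Fin d) → (V →L[ℂ] W))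
    (αhat : WithLp 2 (U × M) ≃ₗᵢ[ℂ] V) (β : Y ≃ₗᵢ[ℂ] W)
    (hco : ∀ z ∈ ball (0 : EuclideanSpace ℂ (Fin d)) 1, ∀ (u : U) (m : M),
        β (φ z u) = ψ z (αhat ((WithLp.equiv 2 (U × M)).symm (u, m))))
    (hdim : Nonempty
      ((⨅ z ∈ ball (0 : EuclideanSpace ℂ (Fin d)) 1, LinearMap.ker (φ z : U →ₗ[ℂ] Y) :
          Submodule ℂ U) ≃ₗᵢ[ℂ]
       (⨅ z ∈ ball (0 : EuclideanSpace ℂ (Fin d)) 1, LinearMap.ker (ψ z : V →ₗ[ℂ] W) :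
          Submodule ℂ V))) :
    ∃ (α : U ≃ₗᵢ[ℂ] V) (β' : Y ≃ₗᵢ[ℂ] W),
      ∀ z ∈ ball (0 : EuclideanSpace ℂ (Fin d)) 1, ∀ u : U,
        β' (φ z u) = ψ z (α u) :=
  coincidence_from_extended_coincidence_general φ ψ αhat β hco hdim
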